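/- For the sup norm on ℝⁿ, m₁(ℝⁿ, ‖·‖_∞) = 1/2ⁿ. -/

import Mathlib

open MeasureTheory Filter Set Pointwise

noncomputable def box (n : ℕ) (R : ℝ) : Set (Fin n → ℝ) := {x | ∀ i, |x i| ≤ R}

noncomputable def density (n : ℕ) (A : Set (Fin n → ℝ)) : ℝ :=
  Filter.limsup (fun R : ℝ =>
    (volume (A ∩ box n R)).toReal / (volume (box n R)).toReal) Filter.atTop

def AvoidsOne (n : ℕ) (N : (Fin n → ℝ) → ℝ) (A : Set (Fin n → ℝ)) : Prop :=
  ∀ x ∈ A, ∀ y ∈ A, N (x - y) ≠ 1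

noncomputable def m1 (n : ℕ) (N : (Fin n → ℝ) → ℝ) : ℝ :=
  sSup {d : ℝ | ∃ A : Set (Fin n → ℝ), MeasurableSet A ∧ AvoidsOne n N A ∧ d = density n A}

noncomputable def polyNorm (n : ℕ) (P : Set (Fin n → ℝ)) (x : Fin n → ℝ) : ℝ :=
  sInf {l : ℝ | 0 ≤ l ∧ x ∈ l • P}

def IsSymmPolytope (n : ℕ) (P : Set (Fin n → ℝ)) : Prop :=
  Convex ℝ P ∧ (∀ x ∈ P, -x ∈ P) ∧ ∃ F : Finset (Fin n → ℝ), P = convexHull ℝ (↑F : Set (Fin n → ℝ))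

def TilesBy (n : ℕ) (P : Set (Fin n → ℝ)) (Λ : Set (Fin n → ℝ)) : Prop :=
  (⋃ l ∈ Λ, (l +ᵥ P)) = Set.univ ∧
  (Λ.Pairwise fun a b => interior (a +ᵥ P) ∩ interior (b +ᵥ P) = ∅)

/-!
Upper bound: distinct vertices of the cube `{0,1}ⁿ` are at sup-distance exactly `1`, so the
`2ⁿ` translates of `A ∩ [-R,R]ⁿ` by these vertices are pairwise disjoint when `A` avoids
sup-distance `1`. They all lie in `[-R-1,R+1]ⁿ`, hence the density ratio at `R` is at most
`((R+1)/(2R))ⁿ → 2⁻ⁿ`.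

Lower bound: `Sⁿ` with `S = ⋃ₖ (2k, 2k+1)` works, because sup-distance `1` forces some coordinate
difference to be `±1`, which never occurs inside `S`; and `S` fills half of every `[-2m, 2m]`.
-/

open scoped ENNReal Function Topology

section SupNorm

variable {ι : Type*} [Finite ι] {f : ι → ℝ}

theorem exists_eq_one_of_iSup_eq_one (h : ⨆ i, f i = 1) : ∃ i, f i = 1 := by
  cases isEmpty_or_nonempty ι
  · simp [Real.iSup_of_isEmpty] at h
  · obtain ⟨i, hi⟩ := exists_eq_ciSup_of_finite (f := f)
    exact ⟨i, hi.trans h⟩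

theorem iSup_eq_of_forall_le_of_eq {c : ℝ} (hle : ∀ i, f i ≤ c) (i₀ : ι) (h : f i₀ = c) :
    ⨆ i, f i = c :=
  have : Nonempty ι := ⟨i₀⟩
  le_antisymm (ciSup_le hle) (h ▸ le_ciSup (Finite.bddAbove_range f) i₀)

end SupNorm

theorem card_nsmul_measure_le_of_pairwise_disjoint_vadd {G α : Type*} [AddGroup G]
    [AddAction G α] [MeasurableSpace α] [MeasurableConstVAdd G α] {μ : Measure α}
    [VAddInvariantMeasure G α μ]
    {ι : Type*} [Fintype ι] {v : ι → G} {B C : Set α} (hB : MeasurableSet B)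
    (hdisj : Pairwise (Disjoint on fun i => v i +ᵥ B)) (hC : ∀ i, v i +ᵥ B ⊆ C) :
    Fintype.card ι • μ B ≤ μ C :=
  calc Fintype.card ι • μ B = ∑ i, μ (v i +ᵥ B) := by simp
    _ = μ (⋃ i, v i +ᵥ B) := by
      rw [measure_iUnion hdisj fun i => hB.const_vadd (v i), tsum_fintype]
    _ ≤ μ C := measure_mono (iUnion_subset hC)

namespace AvoidsOne

variable {n : ℕ} {N : (Fin n → ℝ) → ℝ} {A : Set (Fin n → ℝ)}

theorem mono {B : Set (Fin n → ℝ)} (hA : AvoidsOne n N A) (hBA : B ⊆ A) : AvoidsOne n N B :=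
  fun x hx y hy => hA x (hBA hx) y (hBA hy)

theorem pairwise_disjoint_vadd (hA : AvoidsOne n N A) {ι : Type*} {v : ι → Fin n → ℝ}
    (hv : Pairwise fun i j => N (v i - v j) = 1) :
    Pairwise (Disjoint on fun i => v i +ᵥ A) := by
  intro i j hij
  rw [Function.onFun, Set.disjoint_left]
  rintro _ ⟨a, ha, rfl⟩ ⟨b, hb, hba⟩
  have hdiff : b - a = v i - v j := by
    simp only [vadd_eq_add] at hba
    rw [sub_eq_sub_iff_add_eq_add, add_comm, hba, add_comm]
  exact hA b hb a ha (hdiff ▸ hv hij)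

end AvoidsOne

section CubeVertex

variable {ι : Type*}

def cubeVertex (ε : ι → Bool) : ι → ℝ := fun i => if ε i then 1 else 0

theorem abs_cubeVertex_le (ε : ι → Bool) (i : ι) : |cubeVertex ε i| ≤ 1 := by
  unfold cubeVertex; split_ifs <;> norm_num

theorem abs_cubeVertex_sub_le (ε ε' : ι → Bool) (i : ι) :
    |cubeVertex ε i - cubeVertex ε' i| ≤ 1 := by
  unfold cubeVertex; split_ifs <;> norm_num

theorem abs_cubeVertex_sub_of_ne {ε ε' : ι → Bool} {i : ι} (h : ε i ≠ ε' i) :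
    |cubeVertex ε i - cubeVertex ε' i| = 1 := by
  unfold cubeVertex; cases hε : ε i <;> cases hε' : ε' i <;> simp_all

theorem iSup_abs_cubeVertex_sub [Finite ι] {ε ε' : ι → Bool} (h : ε ≠ ε') :
    ⨆ i, |(cubeVertex ε - cubeVertex ε') i| = 1 := by
  obtain ⟨i₀, hi₀⟩ := Function.ne_iff.1 h
  exact iSup_eq_of_forall_le_of_eq (abs_cubeVertex_sub_le ε ε') i₀
    (abs_cubeVertex_sub_of_ne hi₀)

end CubeVertex

section Box

variable (n : ℕ)

theorem box_eq_pi (R : ℝ) : box n R = univ.pi fun _ => Icc (-R) R := by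
  ext x
  simp only [box, mem_ofPred_eq, Set.mem_pi, mem_univ, mem_Icc, abs_le, forall_const]

theorem measurableSet_box (R : ℝ) : MeasurableSet (box n R) := by
  rw [box_eq_pi]
  exact .univ_pi fun _ => measurableSet_Icc

theorem volume_box (R : ℝ) : volume (box n R) = ENNReal.ofReal (2 * R) ^ n := by
  rw [box_eq_pi, volume_pi_pi]
  simp [Real.volume_Icc, two_mul]

theorem volume_box_ne_top (R : ℝ) : volume (box n R) ≠ ⊤ := by
  rw [volume_box]
  exact ENNReal.pow_ne_top ENNReal.ofReal_ne_top

theorem toReal_volume_box {R : ℝ} (hR : 0 ≤ R) : (volume (box n R)).toReal = (2 * R) ^ n := by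
  simp [volume_box, hR]

theorem cubeVertex_vadd_box_subset (ε : Fin n → Bool) (R : ℝ) :
    cubeVertex ε +ᵥ box n R ⊆ box n (R + 1) := by
  rintro _ ⟨x, hx, rfl⟩ i
  calc |cubeVertex ε i + x i| ≤ |cubeVertex ε i| + |x i| := abs_add_le _ _
    _ ≤ R + 1 := by linarith [abs_cubeVertex_le ε i, hx i]

theorem volume_pi_inter_box (S : Set ℝ) (R : ℝ) :
    volume ((univ.pi fun _ : Fin n => S) ∩ box n R) = volume (S ∩ Icc (-R) R) ^ n := by
  rw [box_eq_pi, ← pi_inter_distrib, volume_pi_pi, Finset.prod_const, Finset.card_univ,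
    Fintype.card_fin]

end Box

section Density

variable {n : ℕ}

noncomputable def densityRatio (n : ℕ) (A : Set (Fin n → ℝ)) (R : ℝ) : ℝ :=
  (volume (A ∩ box n R)).toReal / (volume (box n R)).toReal

theorem density_eq_limsup_densityRatio (A : Set (Fin n → ℝ)) :
    density n A = limsup (densityRatio n A) atTop := rfl

theorem densityRatio_nonneg (A : Set (Fin n → ℝ)) (R : ℝ) : 0 ≤ densityRatio n A R := by
  unfold densityRatio; positivity

theorem densityRatio_le_one (A : Set (Fin n → ℝ)) (R : ℝ) : densityRatio n A R ≤ 1 :=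
  div_le_one_of_le₀ (ENNReal.toReal_mono (volume_box_ne_top n R)
    (measure_mono inter_subset_right)) ENNReal.toReal_nonneg

theorem isBoundedUnder_le_densityRatio (A : Set (Fin n → ℝ)) :
    IsBoundedUnder (· ≤ ·) atTop (densityRatio n A) :=
  isBoundedUnder_of ⟨1, densityRatio_le_one A⟩

theorem isCoboundedUnder_le_densityRatio (A : Set (Fin n → ℝ)) :
    IsCoboundedUnder (· ≤ ·) atTop (densityRatio n A) :=
  isCoboundedUnder_le_of_le atTop (densityRatio_nonneg A)

end Density

namespace AvoidsOne

variable {n : ℕ} {A : Set (Fin n → ℝ)}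

theorem two_pow_mul_volume_inter_box_le (hA : MeasurableSet A)
    (hav : AvoidsOne n (fun x => ⨆ i, |x i|) A) (R : ℝ) :
    2 ^ n * volume (A ∩ box n R) ≤ volume (box n (R + 1)) := by
  have hcard : (2 : ℝ≥0∞) ^ n = (Fintype.card (Fin n → Bool) : ℕ) := by simp
  rw [hcard, ← nsmul_eq_mul]
  exact card_nsmul_measure_le_of_pairwise_disjoint_vadd (hA.inter (measurableSet_box n R))
    ((hav.mono inter_subset_left).pairwise_disjoint_vadd fun _ _ => iSup_abs_cubeVertex_sub)
    fun ε => (vadd_set_mono inter_subset_right).trans (cubeVertex_vadd_box_subset n ε R)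

theorem densityRatio_le (hA : MeasurableSet A) (hav : AvoidsOne n (fun x => ⨆ i, |x i|) A)
    {R : ℝ} (hR : 0 < R) : densityRatio n A R ≤ ((1 + R⁻¹) / 2) ^ n := by
  have hvol : (volume (A ∩ box n R)).toReal ≤ (R + 1) ^ n := by
    have := ENNReal.toReal_mono (volume_box_ne_top n (R + 1))
      (hav.two_pow_mul_volume_inter_box_le hA R)
    rw [ENNReal.toReal_mul, toReal_volume_box n (by linarith), mul_pow] at this
    simpa using this
  calc densityRatio n A R ≤ (R + 1) ^ n / (2 * R) ^ n := by
        rw [densityRatio, toReal_volume_box n hR.le]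
        gcongr
    _ = ((1 + R⁻¹) / 2) ^ n := by
        rw [← div_pow]
        field_simp

theorem density_le (hA : MeasurableSet A) (hav : AvoidsOne n (fun x => ⨆ i, |x i|) A) :
    density n A ≤ 1 / 2 ^ n := by
  have hlim : Tendsto (fun R : ℝ => ((1 + R⁻¹) / 2) ^ n) atTop (𝓝 (1 / 2 ^ n)) := by
    simpa [one_div] using
      (((tendsto_const_nhds (x := (1 : ℝ))).add tendsto_inv_atTop_zero).div_const 2).pow n
  rw [density_eq_limsup_densityRatio, ← hlim.limsup_eq]
  exact limsup_le_limsup ((eventually_gt_atTop 0).mono fun R hR => hav.densityRatio_le hA hR)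
    (isCoboundedUnder_le_densityRatio A) hlim.isBoundedUnder_le

end AvoidsOne

def evenUnitIntervals : Set ℝ := ⋃ k : ℤ, Ioo (2 * k) (2 * k + 1)

theorem measurableSet_evenUnitIntervals : MeasurableSet evenUnitIntervals :=
  .iUnion fun _ => measurableSet_Ioo

theorem abs_sub_ne_one_of_mem_evenUnitIntervals {s t : ℝ} (hs : s ∈ evenUnitIntervals)
    (ht : t ∈ evenUnitIntervals) : |s - t| ≠ 1 := by
  obtain ⟨k, hk⟩ := mem_iUnion.1 hs
  obtain ⟨j, hj⟩ := mem_iUnion.1 ht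
  rw [mem_Ioo] at hk hj
  have no_int_between (d : ℤ) (h₀ : (0 : ℝ) < d) (h₁ : (d : ℝ) < 1) : False := by
    have : 0 < d := by exact_mod_cast h₀
    have : d < 1 := by exact_mod_cast h₁
    omega
  intro h
  rcases (abs_eq zero_le_one).1 h with h | h
  · exact no_int_between (k - j) (by push_cast; linarith) (by push_cast; linarith)
  · exact no_int_between (j - k) (by push_cast; linarith) (by push_cast; linarith)

theorem ofReal_le_volume_evenUnitIntervals_inter_Icc (m : ℕ) :
    ENNReal.ofReal (2 * m) ≤ volume (evenUnitIntervals ∩ Icc (-(2 * m)) (2 * m)) := by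
  have hdisj : Pairwise (Disjoint on fun k : ℤ => Ioo (2 * (k : ℝ)) (2 * k + 1)) :=
    fun k j hkj => (pairwise_disjoint_Ioo_add_zsmul (0 : ℝ) 2 hkj).mono
      (Ioo_subset_Ioo (by simp [mul_comm]) (by simp [add_mul, mul_comm]))
      (Ioo_subset_Ioo (by simp [mul_comm]) (by simp [add_mul, mul_comm]))
  have hsub : (⋃ k ∈ Finset.Ico (-(m : ℤ)) m, Ioo (2 * (k : ℝ)) (2 * k + 1)) ⊆
      evenUnitIntervals ∩ Icc (-(2 * m)) (2 * m) := by
    simp only [iUnion_subset_iff, Finset.mem_Ico]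
    rintro k ⟨hmk, hkm⟩ x hx
    have hmk : -(m : ℝ) ≤ k := by exact_mod_cast hmk
    have hkm : (k : ℝ) + 1 ≤ m := by exact_mod_cast hkm
    exact ⟨mem_iUnion.2 ⟨k, hx⟩, by linarith [hx.1], by linarith [hx.2]⟩
  calc ENNReal.ofReal (2 * m) = (Finset.Ico (-(m : ℤ)) m).card := by
        rw [Int.card_Ico, sub_neg_eq_add, ← two_mul]
        norm_cast
    _ = volume (⋃ k ∈ Finset.Ico (-(m : ℤ)) m, Ioo (2 * (k : ℝ)) (2 * k + 1)) := by
        rw [measure_biUnion_finset (hdisj.set_pairwise _) fun _ _ => measurableSet_Ioo]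
        simp
    _ ≤ _ := measure_mono hsub

theorem avoidsOne_pi_evenUnitIntervals (n : ℕ) :
    AvoidsOne n (fun x => ⨆ i, |x i|) (univ.pi fun _ => evenUnitIntervals) := by
  intro x hx y hy h
  obtain ⟨i, hi⟩ := exists_eq_one_of_iSup_eq_one h
  exact abs_sub_ne_one_of_mem_evenUnitIntervals (hx i (mem_univ i)) (hy i (mem_univ i)) hi

theorem one_div_two_pow_le_densityRatio_pi_evenUnitIntervals (n : ℕ) {m : ℕ} (hm : 0 < m) :
    1 / 2 ^ n ≤ densityRatio n (univ.pi fun _ => evenUnitIntervals) (2 * m) := by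
  have hm₀ : (0 : ℝ) < m := by exact_mod_cast hm
  have hvol : 2 * m ≤ (volume (evenUnitIntervals ∩ Icc (-(2 * m)) (2 * m))).toReal :=
    (ENNReal.ofReal_le_iff_le_toReal
      ((measure_mono inter_subset_right).trans_lt measure_Icc_lt_top).ne).1
      (ofReal_le_volume_evenUnitIntervals_inter_Icc m)
  calc (1 : ℝ) / 2 ^ n = (2 * m : ℝ) ^ n / (2 * (2 * m)) ^ n := by
        rw [← div_pow, ← one_div_pow]
        field_simp
    _ ≤ (volume (evenUnitIntervals ∩ Icc (-(2 * m)) (2 * m))).toReal ^ n /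
          (2 * (2 * m)) ^ n := by
        gcongr
    _ = _ := by
        rw [densityRatio, volume_pi_inter_box, toReal_volume_box n (by positivity),
          ENNReal.toReal_pow]

theorem density_pi_evenUnitIntervals (n : ℕ) :
    density n (univ.pi fun _ => evenUnitIntervals) = 1 / 2 ^ n := by
  refine le_antisymm ((avoidsOne_pi_evenUnitIntervals n).density_le
    (.univ_pi fun _ => measurableSet_evenUnitIntervals)) ?_
  rw [density_eq_limsup_densityRatio]
  refine le_limsup_of_frequently_le ?_ (isBoundedUnder_le_densityRatio _)
  have h2m : Tendsto (fun m : ℕ => 2 * (m : ℝ)) atTop atTop :=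
    tendsto_natCast_atTop_atTop.const_mul_atTop two_pos
  exact h2m.frequently ((eventually_gt_atTop 0).mono fun m hm =>
    one_div_two_pow_le_densityRatio_pi_evenUnitIntervals n hm).frequently

theorem m1_sup_norm (n : ℕ) :
    m1 n (fun x => ⨆ i, |x i|) = 1 / 2 ^ n := by
  refine IsGreatest.csSup_eq ⟨⟨_, .univ_pi fun _ => measurableSet_evenUnitIntervals,
    avoidsOne_pi_evenUnitIntervals n, (density_pi_evenUnitIntervals n).symm⟩, ?_⟩
  rintro _ ⟨A, hA, hav, rfl⟩
  exact hav.density_le hA
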